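/- Let β = 0.89. The convex function φ(z) = (1/β)(e^{β(z-1)} - e^{-β}) + ((1-e^{-β})/β)(1-z) attains its minimum on [0,1] at the unique point z* where e^{β(z*-1)} = (1-e^{-β})/β, and φ(z*) ≥ 0.5893. -/

import Mathlib

/-! With `c = (1 - e^{-β})/β`, the function `φ` is `e^{β(z-1)}/β - c z` plus a constant, a convex
function whose derivative `e^{β(z-1)} - c` vanishes exactly at `z* = 1 + log c / β`; the tangent line
bound `1 + x ≤ eˣ` at `z*` gives minimality. The inequalities `1 - β < e^{-β}` and `1 + β < e^β` put
`c` strictly between `e^{-β}` and `1`, hence `z* ∈ [0, 1]`. At `z*` one has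
`φ(z*) = (c - e^{-β} - c log c)/β`, and the numerical bound follows from Taylor enclosures of
`e^{-0.89}` and `e^{-0.4122}`. -/

open Real Set

lemma one_sub_exp_neg_div_lt_one {β : ℝ} (hβ : 0 < β) : (1 - exp (-β)) / β < 1 := by
  rw [div_lt_one hβ]
  linarith [add_one_lt_exp (neg_ne_zero.mpr hβ.ne')]

lemma exp_neg_lt_one_sub_exp_neg_div {β : ℝ} (hβ : 0 < β) : exp (-β) < (1 - exp (-β)) / β := by
  have hprod : (1 + β) * exp (-β) < 1 := by
    rw [← lt_div_iff₀ (exp_pos _), exp_neg, div_inv_eq_mul, one_mul]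
    linarith [add_one_lt_exp hβ.ne']
  rw [lt_div_iff₀ hβ]
  linarith

lemma exp_mul_log_div {β c : ℝ} (hβ : β ≠ 0) (hc : 0 < c) : exp (β * (log c / β)) = c := by
  rw [mul_div_cancel₀ _ hβ, exp_log hc]

lemma one_add_log_div_mem_Icc {β c : ℝ} (hβ : 0 < β) (hlo : exp (-β) ≤ c) (hhi : c ≤ 1) :
    1 + log c / β ∈ Icc (0 : ℝ) 1 := by
  have hc : 0 < c := (exp_pos _).trans_le hlo
  have hlog_lo : -β ≤ log c := (le_log_iff_exp_le hc).mpr hlo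
  have hlog_hi : log c ≤ 0 := log_nonpos hc.le hhi
  constructor
  · rw [← neg_le_iff_add_nonneg', le_div_iff₀ hβ]
    linarith
  · linarith [div_nonpos_of_nonpos_of_nonneg hlog_hi hβ.le]

lemma exp_div_sub_mul_le_of_exp_eq {β c w : ℝ} (hβ : 0 < β) (hw : exp (β * (w - 1)) = c)
    (z : ℝ) : exp (β * (w - 1)) / β - c * w ≤ exp (β * (z - 1)) / β - c * z := by
  have hshift : exp (β * (z - 1)) = c * exp (β * (z - w)) := by
    rw [← hw, ← exp_add]; ring_nf
  have htangent : c * (β * (z - w) + 1) ≤ exp (β * (z - 1)) := by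
    rw [hshift]
    exact mul_le_mul_of_nonneg_left (add_one_le_exp _) (hw ▸ (exp_pos _).le)
  rw [hw, div_sub' hβ.ne', div_sub' hβ.ne', div_le_div_iff_of_pos_right hβ]
  linarith

lemma exp_neg_089_mem_Icc : exp (-0.89) ∈ Icc (0.4106557517 : ℝ) 0.4106557529 := by
  have h := Real.exp_bound (x := (-0.89 : ℝ)) (by norm_num [abs_le]) (n := 12) (by norm_num)
  rw [abs_le] at h
  norm_num [Finset.sum_range_succ, Nat.factorial] at h
  constructor <;> linarith [h.1, h.2]

lemma le_exp_neg_04122 : (0.66219 : ℝ) ≤ exp (-0.4122) := by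
  have h := Real.exp_bound (x := (-0.4122 : ℝ)) (by norm_num [abs_le]) (n := 10) (by norm_num)
  rw [abs_le] at h
  norm_num [Finset.sum_range_succ, Nat.factorial] at h
  linarith [h.1]

theorem stmt_15 (β : ℝ) (hβ : β = 0.89)
    (φ : ℝ → ℝ)
    (hφ : ∀ z, φ z = (1 / β) * (Real.exp (β * (z - 1)) - Real.exp (-β))
      + ((1 - Real.exp (-β)) / β) * (1 - z))
    (zstar : ℝ) (hzstar : zstar = 1 + (1 / β) * Real.log ((1 - Real.exp (-β)) / β)) :
    zstar ∈ Set.Icc (0:ℝ) 1 ∧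
    Real.exp (β * (zstar - 1)) = (1 - Real.exp (-β)) / β ∧
    (∀ z ∈ Set.Icc (0:ℝ) 1,
      Real.exp (β * (z - 1)) = (1 - Real.exp (-β)) / β → z = zstar) ∧
    (∀ z ∈ Set.Icc (0:ℝ) 1, φ zstar ≤ φ z) ∧
    φ zstar ≥ 0.5893 := by
  have hβpos : 0 < β := by norm_num [hβ]
  set c := (1 - exp (-β)) / β with hc
  have hc_lo : exp (-β) < c := exp_neg_lt_one_sub_exp_neg_div hβpos
  have hc_pos : 0 < c := (exp_pos _).trans hc_lo
  have hφ_eq : ∀ z, φ z = exp (β * (z - 1)) / β - c * z + (c - exp (-β) / β) := by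
    intro z; rw [hφ]; ring
  have hz : zstar = 1 + log c / β := by rw [hzstar]; ring
  have hexpz : exp (β * (zstar - 1)) = c := by
    rw [hz, add_sub_cancel_left, exp_mul_log_div hβpos.ne' hc_pos]
  refine ⟨hz ▸ one_add_log_div_mem_Icc hβpos hc_lo.le (one_sub_exp_neg_div_lt_one hβpos).le,
    hexpz, fun z _ hexp => ?_, fun z _ => ?_, ?_⟩
  · have := mul_left_cancel₀ hβpos.ne' (exp_injective (hexp.trans hexpz.symm))
    linarith
  · have := exp_div_sub_mul_le_of_exp_eq hβpos hexpz z
    rw [hφ_eq, hφ_eq]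
    linarith
  · have hvalue : φ zstar = (c - exp (-β) - c * log c) / β := by
      rw [hφ_eq, hexpz, hz]; field_simp; ring
    subst hβ
    obtain ⟨ht_lo, ht_hi⟩ := exp_neg_089_mem_Icc
    have hc_lo' : 0.6621845473 ≤ c := by rw [hc, le_div_iff₀ (by norm_num)]; linarith
    have hc_hi' : c ≤ 0.6621845487 := by rw [hc, div_le_iff₀ (by norm_num)]; linarith
    have hlog : log c ≤ -0.4122 := (log_le_iff_le_exp hc_pos).mpr (by linarith [le_exp_neg_04122])
    have hclog : 0.6621845473 * 0.4122 ≤ c * -log c :=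
      mul_le_mul hc_lo' (by linarith) (by norm_num) hc_pos.le
    rw [hvalue, ge_iff_le, le_div_iff₀ (by norm_num)]
    linarith
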